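/- Assume N ≥ 2, m > 0 and that g satisfies (g1)–(g3). Then for every u ∈ S_m with P(u) = 0, the scaling map t ↦ I(u_t) attains its global maximum over (0,∞) at t = 1; that is, I(u_t) ≤ I(u) for all t > 0, where u_t(x) = t^{N/2}u(tx). -/

import Mathlib

open MeasureTheory Filter Set Topology

noncomputable section

/-- Euclidean space ℝ^N. -/
abbrev Euc (N : ℕ) := EuclideanSpace ℝ (Fin N)

/-- `u ∈ H¹(ℝ^N)`: continuously differentiable with `∫ |u|² < ∞` and `∫ |∇u|² < ∞`. -/
def memH1 {N : ℕ} (u : Euc N → ℝ) : Prop :=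
  ContDiff ℝ 1 u ∧ Integrable (fun x => (u x) ^ 2) ∧
    Integrable (fun x => ‖gradient u x‖ ^ 2)

/-- `u` is radially symmetric. -/
def IsRadial {N : ℕ} (u : Euc N → ℝ) : Prop :=
  ∃ w : ℝ → ℝ, ∀ x, u x = w ‖x‖

/-- The primitive `G(ξ) = ∫₀^ξ g(τ) dτ`. -/
def Gfun (g : ℝ → ℝ) (ξ : ℝ) : ℝ := ∫ τ in (0:ℝ)..ξ, g τ

/-- Conditions (g1)–(g2) with exponents α, β. -/
def SatisfiesG12 (N : ℕ) (g : ℝ → ℝ) (α β : ℝ) : Prop :=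
  Continuous g ∧
  2 + 4 / (N : ℝ) < α ∧ α < β ∧
  (3 ≤ N → β < 2 * (N : ℝ) / ((N : ℝ) - 2)) ∧
  ∀ ξ : ℝ, ξ ≠ 0 →
    0 < α * Gfun g ξ ∧ α * Gfun g ξ ≤ g ξ * ξ ∧ g ξ * ξ ≤ β * Gfun g ξ

/-- The Laplacian of `u : ℝ^N → ℝ`. -/
def lap {N : ℕ} (u : Euc N → ℝ) (x : Euc N) : ℝ :=
  ∑ i, fderiv ℝ (fun y => fderiv ℝ u y (EuclideanSpace.single i 1)) x
    (EuclideanSpace.single i 1)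

/-- The functional `I(u) = (1/2)∫|∇u|² − ∫ G(u)`. -/
def Ifun (N : ℕ) (g : ℝ → ℝ) (u : Euc N → ℝ) : ℝ :=
  (1/2) * (∫ x, ‖gradient u x‖ ^ 2) - ∫ x, Gfun g (u x)

/-- The Pohozaev functional `P(u) = ∫|∇u|² − N ∫ ((1/2)g(u)u − G(u))`. -/
def Pfun (N : ℕ) (g : ℝ → ℝ) (u : Euc N → ℝ) : ℝ :=
  (∫ x, ‖gradient u x‖ ^ 2) - N * ∫ x, ((1/2) * g (u x) * u x - Gfun g (u x))

/-- The scaling `u_t(x) = t^{N/2} u(tx)`. -/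
def scaled {N : ℕ} (u : Euc N → ℝ) (t : ℝ) : Euc N → ℝ :=
  fun x => t ^ ((N : ℝ)/2) * u (t • x)

/-- Condition (g3): `Ĝ(ξ) = (1/2)g(ξ)ξ − G(ξ)` is `C¹` and `Ĝ'(ξ)ξ > (2 + 4/N)Ĝ(ξ)` for ξ ≠ 0. -/
def SatisfiesG3 (N : ℕ) (g : ℝ → ℝ) : Prop :=
  ContDiff ℝ 1 (fun ξ : ℝ => (1/2) * g ξ * ξ - Gfun g ξ) ∧
  ∀ ξ : ℝ, ξ ≠ 0 →
    (2 + 4 / (N : ℝ)) * ((1/2) * g ξ * ξ - Gfun g ξ)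
      < deriv (fun ξ : ℝ => (1/2) * g ξ * ξ - Gfun g ξ) ξ * ξ


/-!
Put `c = t ^ (N / 2)`. Changing variables, `I(u_t) = t²/2 ∫ |∇u|² - t^(-N) ∫ G(c u)`, and
`P(u) = 0` replaces `∫ |∇u|²` by `N ∫ Ĝ(u)`, so it suffices to integrate the pointwise inequality
`G(ξ) - (N/2) Ĝ(ξ) ≤ t^(-N) G(c ξ) - (N/2) t² Ĝ(ξ)`. Its right side is `h(c)` for
`h(τ) = τ^(-2) G(τξ) - (N/2) Ĝ(ξ) τ^(4/N)`, and `h'(τ) = 2 τ^(4/N - 1) (ψ(τ) - ψ(1))` with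
`ψ(τ) = τ^(-(2 + 4/N)) Ĝ(τξ)`, which (g3) makes increasing; hence `h` is minimal at `τ = 1`.
By (g2), `G ∘ u`, `Ĝ ∘ u` and `G(c u)` are integrable or not together.
-/

section RpowScaling

variable {F f : ℝ → ℝ} {p ξ : ℝ}

theorem hasDerivAt_rpow_neg_mul_comp_mul {τ : ℝ} (hτ : 0 < τ)
    (hF : HasDerivAt F (f (τ * ξ)) (τ * ξ)) :
    HasDerivAt (fun s => s ^ (-p) * F (s * ξ))
      (τ ^ (-p - 1) * (f (τ * ξ) * (τ * ξ) - p * F (τ * ξ))) τ := by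
  refine ((Real.hasDerivAt_rpow_const (p := -p) (Or.inl hτ.ne')).mul
    (hF.comp τ (hasDerivAt_mul_const ξ))).congr_deriv ?_
  rw [show τ ^ (-p) = τ ^ (-p - 1) * τ by
    rw [← Real.rpow_add_one hτ.ne', sub_add_cancel]]
  simp only [Function.comp_apply]
  ring

theorem monotoneOn_rpow_neg_mul_comp_mul (hF : ∀ ζ, HasDerivAt F (f ζ) ζ)
    (hp : ∀ ζ ≠ 0, p * F ζ ≤ f ζ * ζ) (hξ : ξ ≠ 0) :
    MonotoneOn (fun s => s ^ (-p) * F (s * ξ)) (Ioi 0) := by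
  have hderiv (τ : ℝ) (hτ : τ ∈ Ioi 0) := hasDerivAt_rpow_neg_mul_comp_mul (p := p) hτ (hF (τ * ξ))
  refine monotoneOn_of_hasDerivWithinAt_nonneg (convex_Ioi 0)
    (fun τ hτ => (hderiv τ hτ).continuousAt.continuousWithinAt)
    (fun τ hτ => (hderiv τ (interior_subset hτ)).hasDerivWithinAt) fun τ hτ => ?_
  rw [interior_Ioi] at hτ
  exact mul_nonneg (Real.rpow_nonneg hτ.out.le _)
    (sub_nonneg.2 (hp _ (mul_ne_zero hτ.out.ne' hξ)))

theorem antitoneOn_rpow_neg_mul_comp_mul (hF : ∀ ζ, HasDerivAt F (f ζ) ζ)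
    (hp : ∀ ζ ≠ 0, f ζ * ζ ≤ p * F ζ) (hξ : ξ ≠ 0) :
    AntitoneOn (fun s => s ^ (-p) * F (s * ξ)) (Ioi 0) := by
  have := monotoneOn_rpow_neg_mul_comp_mul (F := -F) (f := -f) (fun ζ => (hF ζ).neg)
    (fun ζ hζ => by simpa using hp ζ hζ) hξ
  intro a ha b hb hab
  simpa using this ha hb hab

end RpowScaling

def Ghat (g : ℝ → ℝ) (ξ : ℝ) : ℝ := (1/2) * g ξ * ξ - Gfun g ξ

section Primitive

variable {g : ℝ → ℝ}

@[simp]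
theorem Gfun_zero : Gfun g 0 = 0 := intervalIntegral.integral_same

@[simp]
theorem Ghat_zero : Ghat g 0 = 0 := by simp [Ghat]

theorem hasDerivAt_Gfun (hg : Continuous g) (ξ : ℝ) : HasDerivAt (Gfun g) (g ξ) ξ :=
  intervalIntegral.integral_hasDerivAt_right (hg.intervalIntegrable _ _)
    (hg.stronglyMeasurableAtFilter _ _) hg.continuousAt

theorem continuous_Gfun (hg : Continuous g) : Continuous (Gfun g) :=
  continuous_iff_continuousAt.2 fun ξ => (hasDerivAt_Gfun hg ξ).continuousAt

theorem continuous_Ghat (hg : Continuous g) : Continuous (Ghat g) :=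
  ((continuous_const.mul hg).mul continuous_id).sub (continuous_Gfun hg)

theorem Gfun_sub_le_of_monotoneOn (hg : Continuous g) {q ξ s : ℝ} (hq : 0 < q)
    (hmono : MonotoneOn (fun τ => τ ^ (-(2 + q)) * Ghat g (τ * ξ)) (Ioi 0)) (hs : 0 < s) :
    Gfun g ξ - 2 / q * Ghat g ξ ≤ s ^ (-2 : ℝ) * Gfun g (s * ξ) - 2 / q * Ghat g ξ * s ^ q := by
  set ψ : ℝ → ℝ := fun τ => τ ^ (-(2 + q)) * Ghat g (τ * ξ)
  set h : ℝ → ℝ := fun τ => τ ^ (-2 : ℝ) * Gfun g (τ * ξ) - 2 / q * Ghat g ξ * τ ^ q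
  have hψ1 : ψ 1 = Ghat g ξ := by simp [ψ]
  -- `d/dτ (τ⁻² G(τξ)) = 2 τ⁻³ Ĝ(τξ)`
  have hderiv (τ : ℝ) (hτ : 0 < τ) :
      HasDerivAt h (2 * τ ^ (q - 1) * (ψ τ - ψ 1)) τ := by
    refine ((hasDerivAt_rpow_neg_mul_comp_mul (p := 2) hτ (hasDerivAt_Gfun hg (τ * ξ))).sub
      ((Real.hasDerivAt_rpow_const (p := q) (Or.inl hτ.ne')).const_mul _)).congr_deriv ?_
    have hsplit : τ ^ (-(2 : ℝ) - 1) = τ ^ (q - 1) * τ ^ (-(2 + q)) := by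
      rw [← Real.rpow_add hτ]; ring_nf
    rw [hsplit, hψ1]
    simp only [ψ, Ghat]
    field_simp
  have hmin : IsMinOn h (Ioi 0) 1 := by
    refine isMinOn_Ioi_of_deriv (hderiv 1 one_pos).continuousAt
      (fun τ hτ => (hderiv τ hτ.1).differentiableAt.differentiableWithinAt)
      (fun τ hτ => (hderiv τ (one_pos.trans hτ)).differentiableAt.differentiableWithinAt)
      (fun τ hτ => ?_) (fun τ hτ => ?_)
    · rw [(hderiv τ hτ.1).deriv]
      exact mul_nonpos_of_nonneg_of_nonpos (mul_nonneg zero_le_two (Real.rpow_nonneg hτ.1.le _))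
        (sub_nonpos.2 (hmono hτ.1 (mem_Ioi.2 one_pos) hτ.2.le))
    · have hτ0 : (0 : ℝ) < τ := one_pos.trans hτ
      rw [(hderiv τ hτ0).deriv]
      exact mul_nonneg (by positivity) (sub_nonneg.2 (hmono (mem_Ioi.2 one_pos) hτ0 hτ.out.le))
  simpa [h] using hmin hs

end Primitive

namespace SatisfiesG12

variable {N : ℕ} {g : ℝ → ℝ} {α β : ℝ}

theorem two_lt_alpha (hg : SatisfiesG12 N g α β) : 2 < α := by
  have : (0 : ℝ) ≤ 4 / N := by positivity
  linarith [hg.2.1]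

theorem Gfun_nonneg (hg : SatisfiesG12 N g α β) (ξ : ℝ) : 0 ≤ Gfun g ξ := by
  rcases eq_or_ne ξ 0 with rfl | hξ
  · simp
  · exact (pos_of_mul_pos_right (hg.2.2.2.2 ξ hξ).1 (by linarith [hg.two_lt_alpha])).le

theorem Ghat_le (hg : SatisfiesG12 N g α β) (ξ : ℝ) : Ghat g ξ ≤ (β / 2 - 1) * Gfun g ξ := by
  rcases eq_or_ne ξ 0 with rfl | hξ
  · simp
  · linarith [(hg.2.2.2.2 ξ hξ).2.2, show Ghat g ξ = (1/2) * g ξ * ξ - Gfun g ξ from rfl]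

theorem le_Ghat (hg : SatisfiesG12 N g α β) (ξ : ℝ) : (α / 2 - 1) * Gfun g ξ ≤ Ghat g ξ := by
  rcases eq_or_ne ξ 0 with rfl | hξ
  · simp
  · linarith [(hg.2.2.2.2 ξ hξ).2.1, show Ghat g ξ = (1/2) * g ξ * ξ - Gfun g ξ from rfl]

theorem Ghat_nonneg (hg : SatisfiesG12 N g α β) (ξ : ℝ) : 0 ≤ Ghat g ξ :=
  (mul_nonneg (by linarith [hg.two_lt_alpha]) (hg.Gfun_nonneg ξ)).trans (hg.le_Ghat ξ)

theorem Gfun_le_Ghat (hg : SatisfiesG12 N g α β) (ξ : ℝ) :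
    Gfun g ξ ≤ (α / 2 - 1)⁻¹ * Ghat g ξ := by
  rw [le_inv_mul_iff₀ (by linarith [hg.two_lt_alpha])]
  exact hg.le_Ghat ξ

-- `τ ↦ τ^(-α) G(τξ)` increases and `τ ↦ τ^(-β) G(τξ)` decreases on `(0, ∞)`.
theorem Gfun_mul_le (hg : SatisfiesG12 N g α β) {c : ℝ} (hc : 0 < c) (ξ : ℝ) :
    Gfun g (c * ξ) ≤ max (c ^ α) (c ^ β) * Gfun g ξ := by
  rcases eq_or_ne ξ 0 with rfl | hξ
  · simp
  have hG (p : ℝ) (hp : c ^ (-p) * Gfun g (c * ξ) ≤ Gfun g ξ) :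
      Gfun g (c * ξ) ≤ c ^ p * Gfun g ξ := by
    rwa [Real.rpow_neg hc.le, inv_mul_le_iff₀ (Real.rpow_pos_of_pos hc p)] at hp
  rcases le_total c 1 with hc1 | hc1
  · refine (hG α ?_).trans (mul_le_mul_of_nonneg_right (le_max_left _ _) (hg.Gfun_nonneg ξ))
    simpa using monotoneOn_rpow_neg_mul_comp_mul (p := α) (hasDerivAt_Gfun hg.1)
      (fun ζ hζ => (hg.2.2.2.2 ζ hζ).2.1) hξ hc (mem_Ioi.2 one_pos) hc1
  · refine (hG β ?_).trans (mul_le_mul_of_nonneg_right (le_max_right _ _) (hg.Gfun_nonneg ξ))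
    simpa using antitoneOn_rpow_neg_mul_comp_mul (p := β) (hasDerivAt_Gfun hg.1)
      (fun ζ hζ => (hg.2.2.2.2 ζ hζ).2.2) hξ (mem_Ioi.2 one_pos) hc hc1

theorem Gfun_le_mul (hg : SatisfiesG12 N g α β) {c : ℝ} (hc : 0 < c) (ξ : ℝ) :
    Gfun g ξ ≤ max (c⁻¹ ^ α) (c⁻¹ ^ β) * Gfun g (c * ξ) := by
  simpa [inv_mul_cancel_left₀ hc.ne'] using hg.Gfun_mul_le (inv_pos.2 hc) (c * ξ)

end SatisfiesG12

theorem SatisfiesG3.Gfun_sub_le {N : ℕ} {g : ℝ → ℝ} (hN : 0 < N) (hg : Continuous g)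
    (hg3 : SatisfiesG3 N g) (ξ : ℝ) {t : ℝ} (ht : 0 < t) :
    Gfun g ξ - N / 2 * Ghat g ξ
      ≤ (t ^ N)⁻¹ * Gfun g (t ^ ((N : ℝ) / 2) * ξ) - N / 2 * Ghat g ξ * t ^ 2 := by
  rcases eq_or_ne ξ 0 with rfl | hξ
  · simp
  have hN' : (N : ℝ) ≠ 0 := by positivity
  have hmono := monotoneOn_rpow_neg_mul_comp_mul (F := Ghat g) (p := 2 + 4 / N)
    (fun ζ => (hg3.1.differentiable one_ne_zero ζ).hasDerivAt) (fun ζ hζ => (hg3.2 ζ hζ).le) hξ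
  have key := Gfun_sub_le_of_monotoneOn hg (by positivity) hmono (Real.rpow_pos_of_pos ht (N / 2))
  rwa [← Real.rpow_mul ht.le, ← Real.rpow_mul ht.le, show (N : ℝ) / 2 * -2 = -N by ring,
    Real.rpow_neg ht.le, show (N : ℝ) / 2 * (4 / N) = 2 by field_simp; ring,
    show (2 : ℝ) / (4 / N) = N / 2 by field_simp; ring, Real.rpow_natCast,
    Real.rpow_two] at key

theorem integrable_comp_of_le_mul {X : Type*} [MeasurableSpace X] {μ : Measure X} {u : X → ℝ}
    {F₁ F₂ : ℝ → ℝ} {C : ℝ} (hu : Measurable u) (hF₁ : Measurable F₁) (h₀ : ∀ ξ, 0 ≤ F₁ ξ)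
    (hle : ∀ ξ, F₁ ξ ≤ C * F₂ ξ) (h : Integrable (fun x => F₂ (u x)) μ) :
    Integrable (fun x => F₁ (u x)) μ :=
  (h.const_mul C).mono' (hF₁.comp hu).aestronglyMeasurable <| Eventually.of_forall fun x => by
    rw [Real.norm_of_nonneg (h₀ _)]
    exact hle _

-- If `G ∘ u` is not integrable, neither are `Ĝ ∘ u` and `G(t^(N/2) u)`: all three integrals are
-- then the junk value `0`.
theorem integral_Gfun_sub_le {X : Type*} [MeasurableSpace X] {μ : Measure X} {u : X → ℝ}
    {N : ℕ} {g : ℝ → ℝ} {α β : ℝ} (hN : 0 < N) (hg : SatisfiesG12 N g α β)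
    (hg3 : SatisfiesG3 N g) (hu : Measurable u) {t : ℝ} (ht : 0 < t) :
    ∫ x, Gfun g (u x) ∂μ - N / 2 * ∫ x, Ghat g (u x) ∂μ
      ≤ (t ^ N)⁻¹ * ∫ x, Gfun g (t ^ ((N : ℝ) / 2) * u x) ∂μ
        - N / 2 * t ^ 2 * ∫ x, Ghat g (u x) ∂μ := by
  set c := t ^ ((N : ℝ) / 2)
  have hc : 0 < c := Real.rpow_pos_of_pos ht _
  have hGm : Measurable (Gfun g) := (continuous_Gfun hg.1).measurable
  have hGcm : Measurable fun ξ => Gfun g (c * ξ) := hGm.comp (measurable_const_mul c)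
  by_cases hint : Integrable (fun x => Gfun g (u x)) μ
  · have hGhat : Integrable (fun x => Ghat g (u x)) μ :=
      integrable_comp_of_le_mul hu (continuous_Ghat hg.1).measurable hg.Ghat_nonneg hg.Ghat_le hint
    have hGc : Integrable (fun x => Gfun g (c * u x)) μ :=
      integrable_comp_of_le_mul (F₁ := fun ξ => Gfun g (c * ξ)) hu hGcm
        (fun _ => hg.Gfun_nonneg _) (hg.Gfun_mul_le hc) hint
    have hpt (x : X) : Gfun g (u x) - N / 2 * Ghat g (u x)
        ≤ (t ^ N)⁻¹ * Gfun g (c * u x) - N / 2 * t ^ 2 * Ghat g (u x) := by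
      linarith [hg3.Gfun_sub_le hN hg.1 (u x) ht]
    have hmono : ∫ x, (Gfun g (u x) - N / 2 * Ghat g (u x)) ∂μ
        ≤ ∫ x, ((t ^ N)⁻¹ * Gfun g (c * u x) - N / 2 * t ^ 2 * Ghat g (u x)) ∂μ :=
      integral_mono (hint.sub (hGhat.const_mul _)) ((hGc.const_mul _).sub (hGhat.const_mul _)) hpt
    rwa [integral_sub hint (hGhat.const_mul _), integral_sub (hGc.const_mul _) (hGhat.const_mul _),
      integral_const_mul, integral_const_mul, integral_const_mul] at hmono
  · have hGhat : ¬ Integrable (fun x => Ghat g (u x)) μ := fun h =>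
      hint (integrable_comp_of_le_mul hu hGm hg.Gfun_nonneg hg.Gfun_le_Ghat h)
    have hGc : ¬ Integrable (fun x => Gfun g (c * u x)) μ := fun h =>
      hint (integrable_comp_of_le_mul (F₂ := fun ξ => Gfun g (c * ξ)) hu hGm hg.Gfun_nonneg
        (hg.Gfun_le_mul hc) h)
    simp [integral_undef hint, integral_undef hGhat, integral_undef hGc]

section Scaling

variable {N : ℕ}

theorem gradient_scaled (u : Euc N → ℝ) (t : ℝ) (x : Euc N) :
    gradient (scaled u t) x = (t ^ ((N : ℝ) / 2) * t) • gradient u (t • x) := by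
  have : scaled u t = t ^ ((N : ℝ) / 2) • fun x => u (t • x) := rfl
  rw [gradient, this, fderiv_const_smul_field, Pi.smul_apply, fderiv_comp_smul, smul_smul,
    map_smul, gradient]

theorem integral_norm_gradient_scaled_sq (u : Euc N → ℝ) {t : ℝ} (ht : 0 < t) :
    ∫ x, ‖gradient (scaled u t) x‖ ^ 2 = t ^ 2 * ∫ x, ‖gradient u x‖ ^ 2 := by
  have hc : (t ^ ((N : ℝ) / 2)) ^ 2 = t ^ N := by
    rw [← Real.rpow_natCast, ← Real.rpow_mul ht.le,
      show (N : ℝ) / 2 * (2 : ℕ) = N by push_cast; ring, Real.rpow_natCast]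
  simp only [gradient_scaled, norm_smul, mul_pow, Real.norm_eq_abs, sq_abs]
  rw [integral_const_mul, Measure.integral_comp_smul_of_nonneg volume
    (fun y => ‖gradient u y‖ ^ 2) t (hR := ht.le), finrank_euclideanSpace_fin, smul_eq_mul, hc]
  field_simp

theorem integral_comp_scaled (F : ℝ → ℝ) (u : Euc N → ℝ) {t : ℝ} (ht : 0 ≤ t) :
    ∫ x, F (scaled u t x) = (t ^ N)⁻¹ * ∫ x, F (t ^ ((N : ℝ) / 2) * u x) := by
  have := Measure.integral_comp_smul_of_nonneg volume (fun y => F (t ^ ((N : ℝ) / 2) * u y)) t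
    (hR := ht)
  rwa [finrank_euclideanSpace_fin, smul_eq_mul] at this

end Scaling

theorem statement_9_general (N : ℕ) (hN : 2 ≤ N)
    (g : ℝ → ℝ) (α β : ℝ) (hg : SatisfiesG12 N g α β) (hg3 : SatisfiesG3 N g)
    (u : Euc N → ℝ) (humem : memH1 u)
    (hPoh : Pfun N g u = 0) :
    ∀ t : ℝ, 0 < t → Ifun N g (scaled u t) ≤ Ifun N g u := by
  intro t ht
  have hA : ∫ x, ‖gradient u x‖ ^ 2 = N * ∫ x, Ghat g (u x) := sub_eq_zero.1 hPoh
  have key := integral_Gfun_sub_le (μ := volume) (by omega) hg hg3 humem.1.continuous.measurable ht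
  rw [Ifun, Ifun, integral_norm_gradient_scaled_sq u ht, integral_comp_scaled _ u ht.le, hA]
  linarith

/-- under (g1)–(g3), `t ↦ I(u_t)` attains its global maximum at `t = 1`
for `u` on the Pohozaev manifold. -/
theorem statement_9 (N : ℕ) (hN : 2 ≤ N) (m : ℝ) (hm : 0 < m)
    (g : ℝ → ℝ) (α β : ℝ) (hg : SatisfiesG12 N g α β) (hg3 : SatisfiesG3 N g)
    (u : Euc N → ℝ) (humem : memH1 u) (hmass : (∫ x, (u x) ^ 2) = m)
    (hPoh : Pfun N g u = 0) :
    ∀ t : ℝ, 0 < t → Ifun N g (scaled u t) ≤ Ifun N g u :=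
  statement_9_general N hN g α β hg hg3 u humem hPoh
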